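/- arXiv:2107.10166 — 2 statements merged into one kernel-verified Lean document; each statement's English description precedes it below -/
import Mathlib

section
/- Let ρ : Ω → Matrix (Fin N) (Fin N) ℝ be a random real symmetric matrix satisfying ρ² = ρ pointwise (purity/projector condition), and suppose its two-point function has the form E[ρ_{αβ} ρ_{ρσ}] = A_{αβ}(δ_{αρ}δ_{βσ} + δ_{ασ}δ_{βρ}) + A_{αρ}δ_{αβ}δ_{ρσ} for a symmetric coefficient matrix A, and E[ρ_{αβ}] = δ_{αβ}/N. Then for every α: 3A_{αα} + Σ_{β ≠ α} A_{αβ} = 1/N. -/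
open MeasureTheory Finset

/-- For a random real symmetric pure-state density matrix with the two-point function
`E[ρ_{αβ}ρ_{ρσ}] = A_{αβ}(δ_{αρ}δ_{βσ} + δ_{ασ}δ_{βρ}) + A_{αρ}δ_{αβ}δ_{ρσ}` and
`E[ρ_{αβ}] = δ_{αβ}/N`, the coefficients satisfy `3A_{αα} + Σ_{β≠α} A_{αβ} = 1/N`. -/
theorem purity_constraint_on_coefficients
    {Ω : Type*} [MeasureSpace Ω] [IsProbabilityMeasure (volume : Measure Ω)]
    (N : ℕ) (hN : 0 < N) (ρ : Ω → Matrix (Fin N) (Fin N) ℝ)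
    (hsym : ∀ ω, (ρ ω).IsSymm)
    (hpure : ∀ ω, ρ ω * ρ ω = ρ ω)
    (hint : ∀ α β γ σ : Fin N, Integrable (fun ω => ρ ω α β * ρ ω γ σ))
    (A : Matrix (Fin N) (Fin N) ℝ) (hA : A.IsSymm)
    (h2pt : ∀ α β γ σ : Fin N,
      ∫ ω, ρ ω α β * ρ ω γ σ =
        A α β * ((if α = γ then (1:ℝ) else 0) * (if β = σ then 1 else 0)
          + (if α = σ then 1 else 0) * (if β = γ then 1 else 0))
        + A α γ * (if α = β then 1 else 0) * (if γ = σ then 1 else 0))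
    (h1pt : ∀ α β : Fin N, ∫ ω, ρ ω α β = (if α = β then (1:ℝ) else 0) / N) :
    ∀ α : Fin N, 3 * A α α + ∑ β ∈ Finset.univ.erase α, A α β = 1 / N := by
  intro α
  have key : ∫ ω, ∑ β : Fin N, ρ ω α β * ρ ω β α = ∫ ω, ρ ω α α := by
    congr 1; funext ω
    have := congrArg (fun M => M α α) (hpure ω)
    simpa [Matrix.mul_apply] using this
  rw [integral_finset_sum _ (fun β _ => hint α β β α), h1pt] at key
  have hterm : ∀ β : Fin N, (∫ ω, ρ ω α β * ρ ω β α) =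
      if β = α then 3 * A α α else A α β := by
    intro β
    rw [h2pt α β β α]
    by_cases h : β = α
    · subst h; simp; ring
    · simp [h, Ne.symm h]
  rw [Finset.sum_congr rfl (fun β _ => hterm β),
    ← Finset.add_sum_erase _ _ (Finset.mem_univ α)] at key
  simp only [if_pos rfl] at key
  rw [Finset.sum_congr rfl (fun β hβ => if_neg (Finset.ne_of_mem_erase hβ))] at key
  simpa using key
end

section
/- Let L : T^m → ℝ be smooth on the m-torus with uniform probability measure μ, and let H_{ab} = ∂_a ∂_b L. Then E_μ[∇L · ∇H_{ab}] = -E_μ[(H²)_{ab}] where (H²)_{ab} = Σ_c H_{ac} H_{cb}. Consequently, along the gradient flow (1-β)dθ/dτ = -∇L, E_μ[dH_{ab}/dτ] = E_μ[(H²)_{ab}]/(1-β). -/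
open MeasureTheory

/-- The partial derivative `∂_a f` of `f : (Fin m → ℝ) → ℝ`. -/
noncomputable def pderiv' (m : ℕ) (a : Fin m) (f : (Fin m → ℝ) → ℝ) :
    (Fin m → ℝ) → ℝ :=
  fun x => fderiv ℝ f x (Pi.single a 1)

/-- The expectation with respect to the uniform probability measure on the
`m`-torus of period `π`. -/
noncomputable def torusAvg (m : ℕ) (g : (Fin m → ℝ) → ℝ) : ℝ :=
  (Real.pi ^ m)⁻¹ *
    ∫ x in Set.univ.pi (fun _ : Fin m => Set.Icc (0:ℝ) Real.pi), g x

/-- The Hessian entry `H_{ab} = ∂_a ∂_b L`. -/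
noncomputable def hess (m : ℕ) (a b : Fin m) (L : (Fin m → ℝ) → ℝ) :
    (Fin m → ℝ) → ℝ :=
  pderiv' m a (pderiv' m b L)

section aux

variable {m : ℕ}

lemma contDiff_pderiv' {f : (Fin m → ℝ) → ℝ} (hf : ContDiff ℝ (⊤ : ℕ∞) f) (a : Fin m) :
    ContDiff ℝ (⊤ : ℕ∞) (pderiv' m a f) :=
  (hf.fderiv_right (by simp)).clm_apply contDiff_const

lemma fderiv_translate {f : (Fin m → ℝ) → ℝ} (hf : Differentiable ℝ f)
    (c x : Fin m → ℝ) : fderiv ℝ (fun y => f (y + c)) x = fderiv ℝ f (x + c) := by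
  have h1 : HasFDerivAt (fun y : Fin m → ℝ => y + c) (ContinuousLinearMap.id ℝ _) x :=
    (hasFDerivAt_id x).add_const c
  have := ((hf (x + c)).hasFDerivAt.comp x h1).fderiv
  exact this

lemma periodic_pderiv' {f : (Fin m → ℝ) → ℝ} (hf : ContDiff ℝ (⊤ : ℕ∞) f)
    (hper : ∀ (x : Fin m → ℝ) (i : Fin m), f (x + Pi.single i Real.pi) = f x)
    (a : Fin m) (x : Fin m → ℝ) (i : Fin m) :
    pderiv' m a f (x + Pi.single i Real.pi) = pderiv' m a f x := by
  unfold pderiv'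
  have h := fderiv_translate (hf.differentiable (by simp)) (Pi.single i Real.pi) x
  have h2 : (fun y => f (y + Pi.single i Real.pi)) = f := funext fun y => hper y i
  rw [← h, h2]

lemma pderiv'_comm {g : (Fin m → ℝ) → ℝ} (hg : ContDiff ℝ (⊤ : ℕ∞) g) (a c : Fin m) :
    pderiv' m c (pderiv' m a g) = pderiv' m a (pderiv' m c g) := by
  funext x
  have hdg : Differentiable ℝ (fderiv ℝ g) :=
    (hg.fderiv_right (m := (⊤ : ℕ∞)) (by simp)).differentiable (by simp)
  have key : ∀ v w : Fin m → ℝ,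
      fderiv ℝ (fun y => fderiv ℝ g y v) x w = fderiv ℝ (fderiv ℝ g) x w v := by
    intro v w
    rw [fderiv_clm_apply (hdg x) (differentiableAt_const v)]
    simp
  unfold pderiv'
  rw [key, key]
  exact second_derivative_symmetric (f := g)
    (fun y => ((hg.differentiable (by simp)) y).hasFDerivAt)
    (hdg x).hasFDerivAt _ _

lemma pderiv'_mul {f g : (Fin m → ℝ) → ℝ} (hf : ContDiff ℝ (⊤ : ℕ∞) f) (hg : ContDiff ℝ (⊤ : ℕ∞) g)
    (a : Fin m) (x : Fin m → ℝ) :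
    pderiv' m a (fun y => f y * g y) x =
      pderiv' m a f x * g x + f x * pderiv' m a g x := by
  unfold pderiv'
  rw [fderiv_fun_mul (hf.differentiable (by simp) x) (hg.differentiable (by simp) x)]
  simp
  ring

end aux

lemma insertNth_pi_eq {n : ℕ} (a : Fin (n + 1)) (x : Fin n → ℝ) :
    (Fin.insertNth a Real.pi x : Fin (n + 1) → ℝ)
      = (Fin.insertNth a (0:ℝ) x : Fin (n + 1) → ℝ) + Pi.single a Real.pi := by
  funext i
  refine Fin.succAboveCases a ?_ ?_ i
  · simp
  · intro j
    simp [Fin.succAbove_ne a j, Pi.single_eq_of_ne (Fin.succAbove_ne a j)]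

lemma integral_pderiv'_zero {n : ℕ} {F : (Fin (n + 1) → ℝ) → ℝ} (hF : ContDiff ℝ (⊤ : ℕ∞) F)
    (hper : ∀ (x : Fin (n + 1) → ℝ) (i : Fin (n + 1)),
      F (x + Pi.single i Real.pi) = F x) (a : Fin (n + 1)) :
    ∫ x in Set.univ.pi (fun _ : Fin (n + 1) => Set.Icc (0:ℝ) Real.pi),
      pderiv' (n + 1) a F x = 0 := by
  have hle : (fun _ : Fin (n + 1) => (0:ℝ)) ≤ fun _ => Real.pi :=
    fun _ => Real.pi_pos.le
  set f : Fin (n + 1) → (Fin (n + 1) → ℝ) → ℝ :=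
    fun i x => if i = a then F x else 0 with hf
  set f' : Fin (n + 1) → (Fin (n + 1) → ℝ) → (Fin (n + 1) → ℝ) →L[ℝ] ℝ :=
    fun i x => if i = a then fderiv ℝ F x else 0 with hf'
  have hdiv : ∀ x : Fin (n + 1) → ℝ,
      (∑ i, f' i x (Pi.single i 1)) = pderiv' (n + 1) a F x := by
    intro x
    rw [Finset.sum_eq_single a]
    · simp [hf', pderiv']
    · intro i _ hi; simp [hf', hi]
    · simp
  have hcont : Continuous (pderiv' (n + 1) a F) := (contDiff_pderiv' hF a).continuous
  have key := integral_divergence_of_hasFDerivAt_off_countable'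
    (fun _ : Fin (n + 1) => (0:ℝ)) (fun _ => Real.pi) hle f f' ∅ Set.countable_empty
    (fun i => by
      by_cases hi : i = a
      · simpa [hf, hi] using hF.continuous.continuousOn
      · simpa [hf, hi] using continuousOn_const)
    (fun x _ i => by
      by_cases hi : i = a
      · simpa [hf, hf', hi] using (hF.differentiable (by simp) x).hasFDerivAt
      · simpa [hf, hf', hi] using hasFDerivAt_const (0:ℝ) x)
    (by
      apply ContinuousOn.integrableOn_compact isCompact_Icc
      exact (continuous_congr hdiv |>.mpr hcont).continuousOn)
  rw [Set.pi_univ_Icc]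
  calc (∫ x in Set.Icc (fun _ : Fin (n+1) => (0:ℝ)) (fun _ => Real.pi),
        pderiv' (n + 1) a F x)
      = ∫ x in Set.Icc (fun _ : Fin (n+1) => (0:ℝ)) (fun _ => Real.pi),
          ∑ i, f' i x (Pi.single i 1) := by
        exact setIntegral_congr_fun measurableSet_Icc fun x _ => (hdiv x).symm
    _ = _ := key
    _ = 0 := by
      apply Finset.sum_eq_zero
      intro i _
      by_cases hi : i = a
      · subst hi
        rw [sub_eq_zero]
        refine setIntegral_congr_fun measurableSet_Icc fun x _ => ?_
        simp only [hf, if_pos rfl]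
        rw [insertNth_pi_eq, hper]
      · simp [hf, hi]

/-- For smooth `L` on the torus, `E[∇L · ∇H_{ab}] = -E[(H²)_{ab}]`; consequently along
the gradient flow `(1-β)dθ/dτ = -∇L`, `E[dH_{ab}/dτ] = E[(H²)_{ab}]/(1-β)`. -/
theorem mean_hessian_rate_along_flow (m : ℕ)
    (L : (Fin m → ℝ) → ℝ) (hL : ContDiff ℝ (⊤ : ℕ∞) L)
    (hper : ∀ (x : Fin m → ℝ) (i : Fin m), L (x + Pi.single i Real.pi) = L x) :
    ∀ a b : Fin m,
      (torusAvg m (fun x => ∑ c : Fin m,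
          pderiv' m c L x * pderiv' m c (hess m a b L) x)
        = - torusAvg m (fun x => ∑ c : Fin m, hess m a c L x * hess m c b L x)) ∧
      (∀ β : ℝ, β < 1 →
        torusAvg m (fun x => - (1 - β)⁻¹ * ∑ c : Fin m,
            pderiv' m c L x * pderiv' m c (hess m a b L) x)
          = (1 - β)⁻¹ *
            torusAvg m (fun x => ∑ c : Fin m, hess m a c L x * hess m c b L x)) := by
  intro a b
  obtain ⟨n, rfl⟩ : ∃ n, m = n + 1 :=
    ⟨m - 1, (Nat.succ_pred_eq_of_pos a.pos).symm⟩
  set B := Set.univ.pi (fun _ : Fin (n + 1) => Set.Icc (0:ℝ) Real.pi) with hB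
  have hBc : IsCompact B := isCompact_univ_pi fun _ => isCompact_Icc
  set S : (Fin (n + 1) → ℝ) → ℝ :=
    fun x => ∑ c : Fin (n + 1),
      pderiv' (n + 1) c L x * pderiv' (n + 1) c (hess (n + 1) a b L) x with hS
  set T : (Fin (n + 1) → ℝ) → ℝ :=
    fun x => ∑ c : Fin (n + 1), hess (n + 1) a c L x * hess (n + 1) c b L x with hT
  -- continuity facts
  have hhc : ∀ i j : Fin (n + 1), Continuous (hess (n + 1) i j L) :=
    fun i j => (contDiff_pderiv' (contDiff_pderiv' hL j) i).continuous
  have hUcont : ∀ c : Fin (n + 1),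
      Continuous (fun x => hess (n + 1) a c L x * hess (n + 1) c b L x) :=
    fun c => (hhc a c).mul (hhc c b)
  have hVcont : ∀ c : Fin (n + 1),
      Continuous (fun x =>
        pderiv' (n + 1) c L x * pderiv' (n + 1) c (hess (n + 1) a b L) x) :=
    fun c => (contDiff_pderiv' hL c).continuous.mul
      (contDiff_pderiv' (contDiff_pderiv' (contDiff_pderiv' hL b) a) c).continuous
  -- main per-coordinate identity from the divergence theorem
  have hzero : ∀ c : Fin (n + 1),
      ∫ x in B, (hess (n + 1) a c L x * hess (n + 1) c b L x
        + pderiv' (n + 1) c L x * pderiv' (n + 1) c (hess (n + 1) a b L) x) = 0 := by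
    intro c
    set G : (Fin (n + 1) → ℝ) → ℝ :=
      fun y => pderiv' (n + 1) c L y * pderiv' (n + 1) c (pderiv' (n + 1) b L) y with hG
    have hGc : ContDiff ℝ (⊤ : ℕ∞) G :=
      (contDiff_pderiv' hL c).mul (contDiff_pderiv' (contDiff_pderiv' hL b) c)
    have hbper : ∀ (x : Fin (n + 1) → ℝ) (i : Fin (n + 1)),
        pderiv' (n + 1) b L (x + Pi.single i Real.pi) = pderiv' (n + 1) b L x :=
      fun x i => periodic_pderiv' hL hper b x i
    have hGper : ∀ (x : Fin (n + 1) → ℝ) (i : Fin (n + 1)),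
        G (x + Pi.single i Real.pi) = G x := by
      intro x i
      simp only [hG]
      rw [periodic_pderiv' hL hper c x i,
        periodic_pderiv' (contDiff_pderiv' hL b) hbper c x i]
    have heq : ∀ x, pderiv' (n + 1) a G x
        = hess (n + 1) a c L x * hess (n + 1) c b L x
          + pderiv' (n + 1) c L x * pderiv' (n + 1) c (hess (n + 1) a b L) x := by
      intro x
      rw [hG, pderiv'_mul (contDiff_pderiv' hL c)
        (contDiff_pderiv' (contDiff_pderiv' hL b) c) a x]
      have hcomm : pderiv' (n + 1) a (pderiv' (n + 1) c (pderiv' (n + 1) b L))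
          = pderiv' (n + 1) c (pderiv' (n + 1) a (pderiv' (n + 1) b L)) :=
        (pderiv'_comm (contDiff_pderiv' hL b) a c).symm
      rw [hcomm]
      rfl
    calc (∫ x in B, (hess (n + 1) a c L x * hess (n + 1) c b L x
          + pderiv' (n + 1) c L x * pderiv' (n + 1) c (hess (n + 1) a b L) x))
        = ∫ x in B, pderiv' (n + 1) a G x :=
          setIntegral_congr_fun hBc.measurableSet fun x _ => (heq x).symm
      _ = 0 := integral_pderiv'_zero hGc hGper a
  -- summing up
  have hIT : ∫ x in B, T x = ∑ c : Fin (n + 1),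
      ∫ x in B, hess (n + 1) a c L x * hess (n + 1) c b L x :=
    integral_finset_sum _ fun c _ =>
      (hUcont c).continuousOn.integrableOn_compact hBc
  have hIS : ∫ x in B, S x = ∑ c : Fin (n + 1),
      ∫ x in B, pderiv' (n + 1) c L x * pderiv' (n + 1) c (hess (n + 1) a b L) x :=
    integral_finset_sum _ fun c _ =>
      (hVcont c).continuousOn.integrableOn_compact hBc
  have hsum : (∫ x in B, T x) + (∫ x in B, S x) = 0 := by
    rw [hIT, hIS, ← Finset.sum_add_distrib]
    refine Finset.sum_eq_zero fun c _ => ?_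
    rw [← integral_add ((hUcont c).continuousOn.integrableOn_compact hBc)
      ((hVcont c).continuousOn.integrableOn_compact hBc)]
    exact hzero c
  have hST : ∫ x in B, S x = -∫ x in B, T x := by linarith
  have hfirst : torusAvg (n + 1) S = - torusAvg (n + 1) T := by
    unfold torusAvg
    rw [← hB, hST]
    ring
  refine ⟨hfirst, fun β hβ => ?_⟩
  have h2 : torusAvg (n + 1) (fun x => - (1 - β)⁻¹ * S x)
      = - (1 - β)⁻¹ * torusAvg (n + 1) S := by
    unfold torusAvg
    rw [← hB, integral_const_mul]
    ring
  rw [h2, hfirst]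
  ring
end
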